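/- arXiv:2407.20913 — 3 statements merged into one kernel-verified Lean document; each statement's English description precedes it below -/
import Mathlib

section
/- Theorem 4.1, case B3. In addition to the common setup, assume all four regime pairs share the same drift and volatility: b_{ij} = b and σ_{ij} = σ for all i, j ∈ {1,2} (hence K_{11} = K_{12} = K_{21} = K_{22} =: K), and assume c12 > 0, c21 > 0, χ12 < 0, χ21 > 0 and χ12 + χ21 > 0 (Condition B3). Then the quadruple v11(x) = K·x^γ + χ12, v12(x) = K·x^γ, v21(x) = K·x^γ + χ12, v22(x) = K·x^γ solves the QVI system at every x > 0. -/
/-- Generator of a one-dimensional geometric Brownian motion with drift `b` and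
volatility `σ`: `(L v)(x) = (1/2)σ²x²v''(x) + b x v'(x)`. -/
noncomputable def Lop (b σ : ℝ) (v : ℝ → ℝ) (x : ℝ) : ℝ :=
  (1/2) * σ^2 * x^2 * deriv (deriv v) x + b * x * deriv v x

/-- The quadruple `(v11, v12, v21, v22)` solves the Isaacs system of
quasi-variational inequalities at the point `x`, with profit `f(x) = x^γ`. -/
def solvesQVI (r γ c12 c21 χ12 χ21 b11 σ11 b12 σ12 b21 σ21 b22 σ22 : ℝ)
    (v11 v12 v21 v22 : ℝ → ℝ) (x : ℝ) : Prop :=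
  max (min (r * v11 x - Lop b11 σ11 v11 x - x ^ γ) (v11 x - (v21 x - c12)))
      (v11 x - (v12 x + χ12)) = 0 ∧
  max (min (r * v12 x - Lop b12 σ12 v12 x - x ^ γ) (v12 x - (v22 x - c12)))
      (v12 x - (v11 x + χ21)) = 0 ∧
  max (min (r * v21 x - Lop b21 σ21 v21 x - x ^ γ) (v21 x - (v11 x - c21)))
      (v21 x - (v22 x + χ12)) = 0 ∧
  max (min (r * v22 x - Lop b22 σ22 v22 x - x ^ γ) (v22 x - (v12 x - c21)))
      (v22 x - (v21 x + χ21)) = 0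

/-!
The power function `K x^γ`, with `K` the reciprocal of `r - bγ + σ²γ(1-γ)/2`, solves
`r v - L v = x^γ` exactly, and adding a constant `χ` to it shifts the residual by `r χ`.
In regimes 12 and 22 the residual vanishes, and the switching obstacles are `c12, c21 > 0`
and `χ12 + χ21 > 0`. In regimes 11 and 21 the residual `r χ12` is negative, but these regimes
sit exactly on the switching boundary `v11 = v12 + χ12`, `v21 = v22 + χ12`.
-/

open Real

theorem Lop_add_const (b σ c : ℝ) (v : ℝ → ℝ) :
    Lop b σ (fun y => v y + c) = Lop b σ v := by
  funext x
  simp only [Lop, deriv_add_const']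

theorem Lop_const_mul_rpow (b σ K γ : ℝ) {x : ℝ} (hx : 0 < x) :
    Lop b σ (fun y => K * y ^ γ) x = K * (b * γ - (1/2) * σ^2 * γ * (1 - γ)) * x ^ γ := by
  have hderiv : deriv (fun y => K * y ^ γ) = fun y => K * (γ * y ^ (γ - 1)) := by
    funext y
    rw [deriv_const_mul_field, Real.deriv_rpow_const]
  have hpow1 : x * x ^ (γ - 1) = x ^ γ := by
    rw [mul_comm, ← rpow_add_one hx.ne', sub_add_cancel]
  have hpow2 : x ^ 2 * x ^ (γ - 1 - 1) = x ^ γ := by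
    rw [← rpow_natCast, ← rpow_add hx]; congr 1; push_cast; ring
  rw [Lop, hderiv, deriv_const_mul_field, deriv_const_mul_field, Real.deriv_rpow_const]
  linear_combination (1/2 * σ^2 * K * γ * (γ - 1)) * hpow2 + (b * K * γ) * hpow1

theorem residual_const_mul_rpow {r b σ K γ : ℝ}
    (hK : K * (r - b * γ + (1/2) * σ^2 * γ * (1 - γ)) = 1) {x : ℝ} (hx : 0 < x) :
    r * (K * x ^ γ) - Lop b σ (fun y => K * y ^ γ) x - x ^ γ = 0 := by
  rw [Lop_const_mul_rpow b σ K γ hx]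
  linear_combination x ^ γ * hK

theorem residual_const_mul_rpow_add_const {r b σ K γ : ℝ}
    (hK : K * (r - b * γ + (1/2) * σ^2 * γ * (1 - γ)) = 1) (χ : ℝ) {x : ℝ} (hx : 0 < x) :
    r * (K * x ^ γ + χ) - Lop b σ (fun y => K * y ^ γ + χ) x - x ^ γ = r * χ := by
  rw [Lop_add_const]
  linear_combination residual_const_mul_rpow hK hx

theorem thm4_1_B3_general
    (r γ c12 c21 χ12 χ21 : ℝ)
    (b11 σ11 b12 σ12 b21 σ21 b22 σ22 : ℝ)
    (K11 : ℝ)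
    (hr : 0 < r)
    (hd11 : 0 < r - b11*γ + (1/2)*σ11^2*γ*(1-γ))
    (hK11 : K11 = 1/(r - b11*γ + (1/2)*σ11^2*γ*(1-γ)))
    (heqb12 : b12 = b11) (heqb21 : b21 = b11) (heqb22 : b22 = b11)
    (heqσ12 : σ12 = σ11) (heqσ21 : σ21 = σ11) (heqσ22 : σ22 = σ11)
    (K : ℝ) (hK : K = K11)
    (hc12 : 0 < c12) (hc21 : 0 < c21) (hχ12 : χ12 < 0)
    (hχsum : 0 < χ12 + χ21)
    :
    ∀ x : ℝ, 0 < x →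
      solvesQVI r γ c12 c21 χ12 χ21 b11 σ11 b12 σ12 b21 σ21 b22 σ22
        (fun y => K * y ^ γ + χ12)
        (fun y => K * y ^ γ)
        (fun y => K * y ^ γ + χ12)
        (fun y => K * y ^ γ) x := by
  intro x hx
  subst b12 b21 b22 σ12 σ21 σ22 K K11
  have hKd := one_div_mul_cancel hd11.ne'
  have hrχ12 : r * χ12 < 0 := mul_neg_of_pos_of_neg hr hχ12
  simp only [solvesQVI, residual_const_mul_rpow hKd hx,
    residual_const_mul_rpow_add_const hKd χ12 hx]
  refine ⟨?_, ?_, ?_, ?_⟩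
  · rw [max_eq_right (min_le_of_left_le (by linarith))]; ring
  · rw [min_eq_left (by linarith), max_eq_left (by linarith)]
  · rw [max_eq_right (min_le_of_left_le (by linarith))]; ring
  · rw [min_eq_left (by linarith), max_eq_left (by linarith)]

theorem thm4_1_B3
    (r γ c12 c21 χ12 χ21 : ℝ)
    (b11 σ11 b12 σ12 b21 σ21 b22 σ22 : ℝ)
    (K11 K12 K21 K22 : ℝ)
    (hr : 0 < r) (hγ0 : 0 < γ) (hγ1 : γ < 1)
    (hσ11 : 0 < σ11) (hσ12 : 0 < σ12) (hσ21 : 0 < σ21) (hσ22 : 0 < σ22)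
    (hd11 : 0 < r - b11*γ + (1/2)*σ11^2*γ*(1-γ))
    (hd12 : 0 < r - b12*γ + (1/2)*σ12^2*γ*(1-γ))
    (hd21 : 0 < r - b21*γ + (1/2)*σ21^2*γ*(1-γ))
    (hd22 : 0 < r - b22*γ + (1/2)*σ22^2*γ*(1-γ))
    (hrb11 : b11 < r) (hrb12 : b12 < r) (hrb21 : b21 < r) (hrb22 : b22 < r)
    (hK11 : K11 = 1/(r - b11*γ + (1/2)*σ11^2*γ*(1-γ)))
    (hK12 : K12 = 1/(r - b12*γ + (1/2)*σ12^2*γ*(1-γ)))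
    (hK21 : K21 = 1/(r - b21*γ + (1/2)*σ21^2*γ*(1-γ)))
    (hK22 : K22 = 1/(r - b22*γ + (1/2)*σ22^2*γ*(1-γ)))
    (heqb12 : b12 = b11) (heqb21 : b21 = b11) (heqb22 : b22 = b11)
    (heqσ12 : σ12 = σ11) (heqσ21 : σ21 = σ11) (heqσ22 : σ22 = σ11)
    (K : ℝ) (hK : K = K11)
    (hc12 : 0 < c12) (hc21 : 0 < c21) (hχ12 : χ12 < 0) (hχ21 : 0 < χ21)
    (hχsum : 0 < χ12 + χ21)
    :
    ∀ x : ℝ, 0 < x →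
      solvesQVI r γ c12 c21 χ12 χ21 b11 σ11 b12 σ12 b21 σ21 b22 σ22
        (fun y => K * y ^ γ + χ12)
        (fun y => K * y ^ γ)
        (fun y => K * y ^ γ + χ12)
        (fun y => K * y ^ γ) x :=
  thm4_1_B3_general r γ c12 c21 χ12 χ21 b11 σ11 b12 σ12 b21 σ21 b22 σ22 K11 hr hd11 hK11 heqb12
    heqb21 heqb22 heqσ12 heqσ21 heqσ22 K hK hc12 hc21 hχ12 hχsum
end

section
/- Theorem 4.4, case B1. In addition to the common setup, assume b11 = b21, σ11 = σ21, b12 = b22, σ12 = σ22, and K₁ := K_{11} = K_{21} < K_{12} = K_{22} =: K₂; assume c12 > 0, c21 > 0, χ12 > 0, χ21 > 0 (Condition B1). Let m⁺ := m_{12}⁺ (= m_{22}⁺), x* := (m⁺·χ21 / ((m⁺ − γ)·(K₂ − K₁)))^{1/γ} and A := −(K₂ − K₁)·(γ/m⁺)·(x*)^{γ − m⁺} (these are the smooth-fit relations (K₂ − K₁)(x*)^γ = m⁺χ21/(m⁺ − γ) and A = (K₁ − K₂)(γ/m⁺)(x*)^{γ − m⁺}). Define v11(x) = v21(x) = K₁·x^γ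 for all x > 0, and v12(x) = v22(x) = K₂·x^γ + A·x^{m⁺} for 0 < x < x* and = K₁·x^γ + χ21 for x ≥ x*. Then this quadruple solves the QVI system at every x > 0 with x ≠ x*. -/
/-!
The generator acts on powers by a symbol, `Lop b σ (· ^ p) = LopSymbol b σ p • (· ^ p)`, so
`K x ^ γ` solves `r v - L v = x ^ γ` exactly when `K (r - LopSymbol γ) = 1`, and `A x ^ m⁺` may be
added because `m⁺` is the positive root of `LopSymbol p = r`. Positive costs `c₁₂, c₂₁` make the
`min`-branches inactive, so only the gap `w - u` between `w = v₁₂ = v₂₂` and `u = K₁ x ^ γ` matters.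
For `x < x*` the gap is `(K₂ - K₁) x* ^ γ (ρ ^ γ - (γ/m⁺) ρ ^ m⁺)` with `ρ = x / x*`, which lies in
`[0, χ₂₁]` by Bernoulli's inequality for the exponent `γ / m⁺ ≤ 1` and the smooth-fit relation.
For `x > x*` the residual of `w = u + χ₂₁` is `r χ₂₁ - (K₂ - K₁)(r - LopSymbol γ) x ^ γ ≤ 0`,
because `m⁺ · LopSymbol γ ≤ γ · LopSymbol m⁺ = γ r`.
-/

open Filter Topology

noncomputable def LopSymbol (b σ p : ℝ) : ℝ := σ ^ 2 / 2 * (p * (p - 1)) + b * p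

noncomputable def mPlus (b σ r : ℝ) : ℝ :=
  1/2 - b/σ^2 + Real.sqrt ((1/2 - b/σ^2)^2 + 2*r/σ^2)

noncomputable def mMinus (b σ r : ℝ) : ℝ :=
  1/2 - b/σ^2 - Real.sqrt ((1/2 - b/σ^2)^2 + 2*r/σ^2)

section Symbol

variable {b σ r : ℝ}

lemma sub_LopSymbol (γ : ℝ) :
    r - LopSymbol b σ γ = r - b*γ + (1/2)*σ^2*γ*(1-γ) := by
  unfold LopSymbol; ring

lemma mul_sub_LopSymbol_eq_one {γ K : ℝ} (hd : 0 < r - b*γ + (1/2)*σ^2*γ*(1-γ))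
    (hK : K = 1/(r - b*γ + (1/2)*σ^2*γ*(1-γ))) : K * (r - LopSymbol b σ γ) = 1 := by
  rw [sub_LopSymbol, hK, one_div_mul_cancel hd.ne']

lemma LopSymbol_sub_eq_mul (hσ : σ ≠ 0) (hr : 0 ≤ r) (p : ℝ) :
    LopSymbol b σ p - r = σ ^ 2 / 2 * ((p - mPlus b σ r) * (p - mMinus b σ r)) := by
  have hS := Real.sq_sqrt (show 0 ≤ (1/2 - b/σ^2)^2 + 2*r/σ^2 by positivity)
  unfold LopSymbol mPlus mMinus
  generalize Real.sqrt ((1/2 - b/σ^2)^2 + 2*r/σ^2) = S at hS ⊢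
  have hS' : σ ^ 4 * S ^ 2 = (σ ^ 2 / 2 - b) ^ 2 + 2 * r * σ ^ 2 := by
    rw [hS]; field_simp
  field_simp
  linear_combination 4 * hS'

lemma LopSymbol_mPlus (hσ : σ ≠ 0) (hr : 0 ≤ r) : LopSymbol b σ (mPlus b σ r) = r := by
  simpa [sub_eq_zero] using LopSymbol_sub_eq_mul (b := b) hσ hr (mPlus b σ r)

lemma mMinus_nonpos (hr : 0 ≤ r) : mMinus b σ r ≤ 0 := by
  unfold mMinus
  calc 1/2 - b/σ^2 - Real.sqrt ((1/2 - b/σ^2)^2 + 2*r/σ^2)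
      ≤ |1/2 - b/σ^2| - Real.sqrt ((1/2 - b/σ^2)^2) := by
        gcongr
        · exact le_abs_self _
        · linarith [show 0 ≤ 2*r/σ^2 by positivity]
    _ = 0 := by rw [Real.sqrt_sq_eq_abs, sub_self]

lemma lt_mPlus_of_LopSymbol_lt (hσ : σ ≠ 0) (hr : 0 ≤ r) {p : ℝ} (hp : 0 ≤ p)
    (h : LopSymbol b σ p < r) : p < mPlus b σ r := by
  by_contra! hle
  have hfac := LopSymbol_sub_eq_mul (b := b) hσ hr p
  have : 0 ≤ σ ^ 2 / 2 * ((p - mPlus b σ r) * (p - mMinus b σ r)) :=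
    mul_nonneg (by positivity)
      (mul_nonneg (sub_nonneg.2 hle) (by linarith [mMinus_nonpos (b := b) (σ := σ) hr]))
  linarith

lemma mul_LopSymbol_le {γ m : ℝ} (hγ : 0 ≤ γ) (hγm : γ ≤ m) :
    m * LopSymbol b σ γ ≤ γ * LopSymbol b σ m := by
  have h : γ * LopSymbol b σ m - m * LopSymbol b σ γ = σ ^ 2 / 2 * (γ * m * (m - γ)) := by
    unfold LopSymbol; ring
  have : 0 ≤ σ ^ 2 / 2 * (γ * m * (m - γ)) :=
    mul_nonneg (by positivity) (mul_nonneg (mul_nonneg hγ (hγ.trans hγm)) (sub_nonneg.2 hγm))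
  linarith

end Symbol

section Generator

variable {b σ x : ℝ}

lemma Lop_congr {f g : ℝ → ℝ} (h : f =ᶠ[𝓝 x] g) : Lop b σ f x = Lop b σ g x := by
  unfold Lop
  rw [h.deriv_eq, h.deriv.deriv_eq]

lemma Lop_eq_of_hasDerivAt {f f' : ℝ → ℝ} {f'' : ℝ}
    (hf : ∀ᶠ y in 𝓝 x, HasDerivAt f (f' y) y) (hf' : HasDerivAt f' f'' x) :
    Lop b σ f x = 1/2 * σ^2 * x^2 * f'' + b * x * f' x := by
  have h : deriv f =ᶠ[𝓝 x] f' := hf.mono fun y hy => hy.deriv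
  unfold Lop
  rw [h.deriv_eq, hf'.deriv, h.eq_of_nhds]

lemma hasDerivAt_const_mul_rpow {y : ℝ} (hy : y ≠ 0) (a p : ℝ) :
    HasDerivAt (fun z => a * z ^ p) (a * p * y ^ (p - 1)) y := by
  simpa [mul_assoc] using (Real.hasDerivAt_rpow_const (p := p) (Or.inl hy)).const_mul a

lemma Lop_rpow_add_rpow_add_const (hx : 0 < x) (a p c q d : ℝ) :
    Lop b σ (fun z => a * z ^ p + c * z ^ q + d) x
      = a * LopSymbol b σ p * x ^ p + c * LopSymbol b σ q * x ^ q := by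
  have hf : ∀ᶠ y in 𝓝 x, HasDerivAt (fun z => a * z ^ p + c * z ^ q + d)
      (a * p * y ^ (p - 1) + c * q * y ^ (q - 1)) y := by
    filter_upwards [Ioi_mem_nhds hx] with y hy
    exact ((hasDerivAt_const_mul_rpow hy.ne' a p).add
      (hasDerivAt_const_mul_rpow hy.ne' c q)).add_const d
  have hf' := (hasDerivAt_const_mul_rpow hx.ne' (a * p) (p - 1)).add
    (hasDerivAt_const_mul_rpow hx.ne' (c * q) (q - 1))
  rw [Lop_eq_of_hasDerivAt hf hf']
  simp only [LopSymbol, Real.rpow_sub_one hx.ne']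
  field_simp
  ring

end Generator

lemma residual_of_eventuallyEq {b σ r x K γ A m d : ℝ} {f : ℝ → ℝ} (hx : 0 < x)
    (hf : f =ᶠ[𝓝 x] fun z => K * z ^ γ + A * z ^ m + d)
    (hK : K * (r - LopSymbol b σ γ) = 1) :
    r * f x - Lop b σ f x - x ^ γ = A * (r - LopSymbol b σ m) * x ^ m + r * d := by
  rw [Lop_congr hf, Lop_rpow_add_rpow_add_const hx, hf.eq_of_nhds]
  linear_combination x ^ γ * hK

lemma rpow_le_div_mul_rpow_add {ρ γ m : ℝ} (hρ : 0 ≤ ρ) (hγ : 0 ≤ γ) (hγm : γ ≤ m) :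
    ρ ^ γ ≤ γ / m * ρ ^ m + (1 - γ / m) := by
  rcases hγ.eq_or_lt with rfl | hγ
  · simp
  have hm : 0 < m := hγ.trans_le hγm
  have h := rpow_one_add_le_one_add_mul_self (s := ρ ^ m - 1)
    (by linarith [Real.rpow_nonneg hρ m]) (div_nonneg hγ.le hm.le) ((div_le_one hm).2 hγm)
  rwa [add_sub_cancel, ← Real.rpow_mul hρ, mul_div_cancel₀ _ hm.ne', mul_sub, mul_one,
    ← add_sub_assoc, add_comm 1, add_sub_assoc] at h

section SmoothFit

variable {γ m χ K₁ K₂ xs A x : ℝ}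

lemma smoothFit_threshold (hγ : 0 < γ) (hγm : γ < m) (hK : K₁ < K₂) (hχ : 0 < χ)
    (hxs : xs = (m * χ / ((m - γ) * (K₂ - K₁))) ^ (1 / γ)) :
    0 < xs ∧ (K₂ - K₁) * xs ^ γ * (1 - γ / m) = χ := by
  have hm : 0 < m := hγ.trans hγm
  have hbase : 0 < m * χ / ((m - γ) * (K₂ - K₁)) := by
    have := sub_pos.2 hγm; have := sub_pos.2 hK; positivity
  refine ⟨hxs ▸ Real.rpow_pos_of_pos hbase _, ?_⟩
  rw [hxs, ← Real.rpow_mul hbase.le, one_div_mul_cancel hγ.ne', Real.rpow_one]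
  field_simp [(sub_pos.2 hγm).ne', (sub_pos.2 hK).ne']

lemma gap_eq (hxs : 0 < xs) (hx : 0 ≤ x) (hA : A = -(K₂ - K₁) * (γ / m) * xs ^ (γ - m)) :
    (K₂ - K₁) * x ^ γ + A * x ^ m
      = (K₂ - K₁) * xs ^ γ * ((x / xs) ^ γ - γ / m * (x / xs) ^ m) := by
  rw [hA, Real.div_rpow hx hxs.le, Real.div_rpow hx hxs.le, Real.rpow_sub hxs]
  field_simp [(Real.rpow_pos_of_pos hxs γ).ne', (Real.rpow_pos_of_pos hxs m).ne']
  ring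

lemma gap_le (hγ : 0 ≤ γ) (hγm : γ ≤ m) (hK : K₁ < K₂) (hxs : 0 < xs) (hx : 0 ≤ x)
    (hfit : (K₂ - K₁) * xs ^ γ * (1 - γ / m) = χ)
    (hA : A = -(K₂ - K₁) * (γ / m) * xs ^ (γ - m)) :
    (K₂ - K₁) * x ^ γ + A * x ^ m ≤ χ := by
  rw [gap_eq hxs hx hA, ← hfit]
  have := rpow_le_div_mul_rpow_add (div_nonneg hx hxs.le) hγ hγm
  exact mul_le_mul_of_nonneg_left (by linarith)
    (mul_nonneg (sub_pos.2 hK).le (Real.rpow_nonneg hxs.le γ))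

lemma gap_nonneg (hγ : 0 < γ) (hγm : γ < m) (hK : K₁ < K₂) (hxs : 0 < xs) (hx : 0 < x)
    (hxxs : x ≤ xs) (hA : A = -(K₂ - K₁) * (γ / m) * xs ^ (γ - m)) :
    0 ≤ (K₂ - K₁) * x ^ γ + A * x ^ m := by
  have hρ : 0 < x / xs := div_pos hx hxs
  have hρm : (x / xs) ^ m ≤ (x / xs) ^ γ :=
    Real.rpow_le_rpow_of_exponent_ge hρ ((div_le_one hxs).2 hxxs) hγm.le
  have : γ / m * (x / xs) ^ m ≤ (x / xs) ^ m :=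
    mul_le_of_le_one_left (Real.rpow_nonneg hρ.le m) ((div_le_one (hγ.trans hγm)).2 hγm.le)
  rw [gap_eq hxs hx.le hA]
  have := Real.rpow_nonneg hxs.le γ
  have := sub_pos.2 hK
  have : 0 ≤ (x / xs) ^ γ - γ / m * (x / xs) ^ m := by linarith
  positivity

lemma mul_le_of_smoothFit {b σ r : ℝ} (hm : 0 < m) (hD : 0 < r - LopSymbol b σ γ)
    (hmγ : m * LopSymbol b σ γ ≤ γ * r) (hK : K₁ < K₂) (hxs : 0 < xs) (hxsx : xs ≤ x)
    (hγ : 0 ≤ γ) (hfit : (K₂ - K₁) * xs ^ γ * (1 - γ / m) = χ) :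
    r * χ ≤ (K₂ - K₁) * (r - LopSymbol b σ γ) * x ^ γ := by
  have hΔ : 0 ≤ (K₂ - K₁) * xs ^ γ := mul_nonneg (sub_pos.2 hK).le (Real.rpow_nonneg hxs.le γ)
  have hr : r * (1 - γ / m) ≤ r - LopSymbol b σ γ := by
    rw [mul_one_sub, mul_div_assoc', le_sub_comm, sub_sub_cancel, le_div_iff₀ hm]
    linarith
  calc r * χ = (K₂ - K₁) * xs ^ γ * (r * (1 - γ / m)) := by rw [← hfit]; ring
    _ ≤ (K₂ - K₁) * xs ^ γ * (r - LopSymbol b σ γ) := by gcongr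
    _ ≤ (K₂ - K₁) * x ^ γ * (r - LopSymbol b σ γ) := by
        have := sub_pos.2 hK
        gcongr
    _ = (K₂ - K₁) * (r - LopSymbol b σ γ) * x ^ γ := by ring

end SmoothFit

lemma max_min_eq_zero_iff {P c q : ℝ} (hc : 0 < c) : max (min P c) q = 0 ↔ max P q = 0 := by
  rcases le_total P c with h | h
  · rw [min_eq_left h]
  · rw [min_eq_right h]
    constructor <;> intro h0 <;> linarith [le_max_left c q, le_max_left P q]

lemma solvesQVI_of_max_eq_zero {r γ c12 c21 χ12 χ21 b₁ σ₁ b₂ σ₂ x : ℝ} {u w : ℝ → ℝ}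
    (hc12 : 0 < c12) (hc21 : 0 < c21)
    (hu : max (r * u x - Lop b₁ σ₁ u x - x ^ γ) (u x - (w x + χ12)) = 0)
    (hw : max (r * w x - Lop b₂ σ₂ w x - x ^ γ) (w x - (u x + χ21)) = 0) :
    solvesQVI r γ c12 c21 χ12 χ21 b₁ σ₁ b₂ σ₂ b₁ σ₁ b₂ σ₂ u w u w x := by
  simp only [solvesQVI, sub_sub_cancel, max_min_eq_zero_iff hc12, max_min_eq_zero_iff hc21]
  exact ⟨hu, hw, hu, hw⟩

theorem thm4_4_B1_general
    (r γ c12 c21 χ12 χ21 : ℝ)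
    (b11 σ11 b12 σ12 b21 σ21 b22 σ22 : ℝ)
    (K11 K12 : ℝ)
    (hr : 0 < r) (hγ0 : 0 < γ)
    (hσ12 : 0 < σ12)
    (hd11 : 0 < r - b11*γ + (1/2)*σ11^2*γ*(1-γ))
    (hd12 : 0 < r - b12*γ + (1/2)*σ12^2*γ*(1-γ))
    (hK11 : K11 = 1/(r - b11*γ + (1/2)*σ11^2*γ*(1-γ)))
    (hK12 : K12 = 1/(r - b12*γ + (1/2)*σ12^2*γ*(1-γ)))
    (heqb21 : b21 = b11) (heqσ21 : σ21 = σ11)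
    (heqb22 : b22 = b12) (heqσ22 : σ22 = σ12)
    (K₁ K₂ : ℝ) (hK₁ : K₁ = K11) (hK₂ : K₂ = K12)
    (hKlt : K₁ < K₂)
    (m : ℝ) (hm : m = 1/2 - b12/σ12^2 + Real.sqrt ((1/2 - b12/σ12^2)^2 + 2*r/σ12^2))
    (xs A : ℝ)
    (hxs : xs = (m * χ21 / ((m - γ) * (K₂ - K₁))) ^ (1/γ))
    (hA : A = -(K₂ - K₁) * (γ / m) * xs ^ (γ - m))
    (hc12 : 0 < c12) (hc21 : 0 < c21) (hχ12 : 0 < χ12) (hχ21 : 0 < χ21)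
    :
    ∀ x : ℝ, 0 < x → x ≠ xs →
      solvesQVI r γ c12 c21 χ12 χ21 b11 σ11 b12 σ12 b21 σ21 b22 σ22
        (fun y => K₁ * y ^ γ)
        (fun y => if y < xs then K₂ * y ^ γ + A * y ^ m else K₁ * y ^ γ + χ21)
        (fun y => K₁ * y ^ γ)
        (fun y => if y < xs then K₂ * y ^ γ + A * y ^ m else K₁ * y ^ γ + χ21) x := by
  intro x hx hne
  subst b21 σ21 b22 σ22
  have hK₁D := mul_sub_LopSymbol_eq_one hd11 (hK₁.trans hK11)
  have hK₂D := mul_sub_LopSymbol_eq_one hd12 (hK₂.trans hK12)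
  rw [← sub_LopSymbol] at hd12
  have hroot : LopSymbol b12 σ12 m = r := hm ▸ LopSymbol_mPlus hσ12.ne' hr.le
  have hγm : γ < m := hm ▸ lt_mPlus_of_LopSymbol_lt hσ12.ne' hr.le hγ0.le (by linarith)
  obtain ⟨hxs0, hfit⟩ := smoothFit_threshold hγ0 hγm hKlt hχ21 hxs
  have hu : r * (K₁ * x ^ γ) - Lop b11 σ11 (fun y => K₁ * y ^ γ) x - x ^ γ = 0 := by
    simpa using residual_of_eventuallyEq (f := fun y => K₁ * y ^ γ) (A := 0) (m := γ) (d := 0) hx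
      (.of_forall fun z => by ring) hK₁D
  set w : ℝ → ℝ := fun y => if y < xs then K₂ * y ^ γ + A * y ^ m else K₁ * y ^ γ + χ21
  rcases hne.lt_or_gt with hlt | hgt
  · have hw : w =ᶠ[𝓝 x] fun z => K₂ * z ^ γ + A * z ^ m + 0 := by
      filter_upwards [Iio_mem_nhds hlt] with y hy
      simp [w, Set.mem_Iio.1 hy]
    have hgap₀ := gap_nonneg hγ0 hγm hKlt hxs0 hx hlt.le hA
    have hgap₁ := gap_le hγ0.le hγm.le hKlt hxs0 hx.le hfit hA
    refine solvesQVI_of_max_eq_zero hc12 hc21 ?_ ?_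
    · rw [hu, max_eq_left]; simp only [w, if_pos hlt]; linarith
    · rw [residual_of_eventuallyEq hx hw hK₂D, hroot, max_eq_left]
      · ring
      · simp only [w, if_pos hlt]; linarith
  · -- `K₁ = K₂ - (K₂ - K₁)` puts `w` in the normalisation `hK₂D` of regime 2
    have hw : w =ᶠ[𝓝 x] fun z => K₂ * z ^ γ + (-(K₂ - K₁)) * z ^ γ + χ21 := by
      filter_upwards [Ioi_mem_nhds hgt] with y hy
      simp only [w, if_neg (not_lt.2 (Set.mem_Ioi.1 hy).le)]; ring
    have hstop := mul_le_of_smoothFit (hγ0.trans hγm) hd12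
      (by simpa [hroot] using mul_LopSymbol_le (b := b12) (σ := σ12) hγ0.le hγm.le)
      hKlt hxs0 hgt.le hγ0.le hfit
    refine solvesQVI_of_max_eq_zero hc12 hc21 ?_ ?_
    · rw [hu, max_eq_left]; simp only [w, if_neg (not_lt.2 hgt.le)]; linarith
    · rw [residual_of_eventuallyEq hx hw hK₂D, max_eq_right] <;>
        simp only [w, if_neg (not_lt.2 hgt.le)]
      · ring
      · linarith

theorem thm4_4_B1
    (r γ c12 c21 χ12 χ21 : ℝ)
    (b11 σ11 b12 σ12 b21 σ21 b22 σ22 : ℝ)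
    (K11 K12 K21 K22 : ℝ)
    (hr : 0 < r) (hγ0 : 0 < γ) (hγ1 : γ < 1)
    (hσ11 : 0 < σ11) (hσ12 : 0 < σ12) (hσ21 : 0 < σ21) (hσ22 : 0 < σ22)
    (hd11 : 0 < r - b11*γ + (1/2)*σ11^2*γ*(1-γ))
    (hd12 : 0 < r - b12*γ + (1/2)*σ12^2*γ*(1-γ))
    (hd21 : 0 < r - b21*γ + (1/2)*σ21^2*γ*(1-γ))
    (hd22 : 0 < r - b22*γ + (1/2)*σ22^2*γ*(1-γ))
    (hrb11 : b11 < r) (hrb12 : b12 < r) (hrb21 : b21 < r) (hrb22 : b22 < r)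
    (hK11 : K11 = 1/(r - b11*γ + (1/2)*σ11^2*γ*(1-γ)))
    (hK12 : K12 = 1/(r - b12*γ + (1/2)*σ12^2*γ*(1-γ)))
    (hK21 : K21 = 1/(r - b21*γ + (1/2)*σ21^2*γ*(1-γ)))
    (hK22 : K22 = 1/(r - b22*γ + (1/2)*σ22^2*γ*(1-γ)))
    (heqb21 : b21 = b11) (heqσ21 : σ21 = σ11)
    (heqb22 : b22 = b12) (heqσ22 : σ22 = σ12)
    (K₁ K₂ : ℝ) (hK₁ : K₁ = K11) (hK₂ : K₂ = K12)
    (hKlt : K₁ < K₂)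
    (m : ℝ) (hm : m = 1/2 - b12/σ12^2 + Real.sqrt ((1/2 - b12/σ12^2)^2 + 2*r/σ12^2))
    (xs A : ℝ)
    (hxs : xs = (m * χ21 / ((m - γ) * (K₂ - K₁))) ^ (1/γ))
    (hA : A = -(K₂ - K₁) * (γ / m) * xs ^ (γ - m))
    (hc12 : 0 < c12) (hc21 : 0 < c21) (hχ12 : 0 < χ12) (hχ21 : 0 < χ21)
    :
    ∀ x : ℝ, 0 < x → x ≠ xs →
      solvesQVI r γ c12 c21 χ12 χ21 b11 σ11 b12 σ12 b21 σ21 b22 σ22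
        (fun y => K₁ * y ^ γ)
        (fun y => if y < xs then K₂ * y ^ γ + A * y ^ m else K₁ * y ^ γ + χ21)
        (fun y => K₁ * y ^ γ)
        (fun y => if y < xs then K₂ * y ^ γ + A * y ^ m else K₁ * y ^ γ + χ21) x :=
  thm4_4_B1_general r γ c12 c21 χ12 χ21 b11 σ11 b12 σ12 b21 σ21 b22 σ22 K11 K12 hr hγ0 hσ12 hd11
    hd12 hK11 hK12 heqb21 heqσ21 heqb22 heqσ22 K₁ K₂ hK₁ hK₂ hKlt m hm xs A hxs hA hc12 hc21 hχ12
    hχ21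
end

section
/- Theorem 4.5, case B1. In addition to the common setup, assume b11 = b21, σ11 = σ21, b12 = b22, σ12 = σ22, and K₁ := K_{11} = K_{21} > K_{12} = K_{22} =: K₂; assume c12 > 0, c21 > 0, χ12 > 0, χ21 > 0 (Condition B1). Let m⁺ := m_{11}⁺ (= m_{21}⁺), x* := (m⁺·χ12 / ((m⁺ − γ)·(K₁ − K₂)))^{1/γ} and A := −(K₁ − K₂)·(γ/m⁺)·(x*)^{γ − m⁺} (these are the smooth-fit relations (K₁ − K₂)(x*)^γ = m⁺χ12/(m⁺ − γ) and A = (K₂ − K₁)(γ/m⁺)(x*)^{γ − m⁺}). Define v11(x) = v21(x) = K₁·x^γ + A·x^{m⁺} for 0 < x < x* and = K₂·x^γ + χ12 for x ≥ x*, and v12(x) = v22(x) = K₂·x^γ for all x > 0. Then this quadruple solves the QVI system at every x > 0 with x ≠ x*. -/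
/-!
Because regimes `1j` and `2j` share their coefficients, the system collapses to the pair
`v₁ = v11 = v21`, `v₂ = v12 = v22`, and with `c12, c21 > 0` every row reduces to conditions on the
residual `r v - L v - x ^ γ` and on the gap `v₁ - v₂`. The residual of `K x ^ γ` is
`(1 - K (r - bγ + σ²γ(1-γ)/2)) x ^ γ`, zero for `K = K_i`, and `x ^ m` is annihilated by `r - L`,
`m` being a root of `σ²p(p-1)/2 + bp - r`. Below `x*` the gap is
`(K₁ - K₂)(x ^ γ - (γ/m) x* ^ (γ-m) x ^ m)`, which lies in `[0, χ12]` by Bernoulli's inequality and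
the smooth-fit relation. Above `x*`, `v₁ = v₂ + χ12` and its residual is nonpositive because
`x ^ γ ≥ x* ^ γ` and `r (1 - γ/m) ≤ r - bγ + σ²γ(1-γ)/2`.
-/

open Topology

section Generator

variable {b σ x : ℝ}

theorem Lop_congr_of_eventuallyEq {v w : ℝ → ℝ} (h : v =ᶠ[𝓝 x] w) :
    Lop b σ v x = Lop b σ w x := by
  unfold Lop
  rw [h.deriv_eq, h.deriv.deriv_eq]

theorem hasDerivAt_mul_rpow_add_mul_rpow (K A p q : ℝ) (hx : x ≠ 0) :
    HasDerivAt (fun y => K * y ^ p + A * y ^ q)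
      (K * p * x ^ (p - 1) + A * q * x ^ (q - 1)) x := by
  have hp := (Real.hasDerivAt_rpow_const (p := p) (Or.inl hx)).const_mul K
  have hq := (Real.hasDerivAt_rpow_const (p := q) (Or.inl hx)).const_mul A
  exact (hp.add hq).congr_deriv (by ring)

theorem Lop_mul_rpow_add_mul_rpow (K A p q : ℝ) (hx : 0 < x) :
    Lop b σ (fun y => K * y ^ p + A * y ^ q) x
      = K * ((1/2) * σ^2 * p * (p - 1) + b * p) * x ^ p
        + A * ((1/2) * σ^2 * q * (q - 1) + b * q) * x ^ q := by
  have hderiv : deriv (fun y => K * y ^ p + A * y ^ q)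
      =ᶠ[𝓝 x] fun y => K * p * y ^ (p - 1) + A * q * y ^ (q - 1) := by
    filter_upwards [Ioi_mem_nhds hx] with y hy
    exact (hasDerivAt_mul_rpow_add_mul_rpow K A p q (ne_of_gt hy)).deriv
  unfold Lop
  rw [hderiv.deriv_eq, hderiv.eq_of_nhds,
    (hasDerivAt_mul_rpow_add_mul_rpow (K * p) (A * q) (p - 1) (q - 1) hx.ne').deriv]
  simp only [Real.rpow_sub_one hx.ne']
  field_simp
  ring

theorem Lop_mul_rpow (K p : ℝ) (hx : 0 < x) :
    Lop b σ (fun y => K * y ^ p) x = K * ((1/2) * σ^2 * p * (p - 1) + b * p) * x ^ p := by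
  simpa using Lop_mul_rpow_add_mul_rpow (b := b) (σ := σ) K 0 p p hx

theorem Lop_mul_rpow_add_const (K c p : ℝ) (hx : 0 < x) :
    Lop b σ (fun y => K * y ^ p + c) x = K * ((1/2) * σ^2 * p * (p - 1) + b * p) * x ^ p := by
  simpa using Lop_mul_rpow_add_mul_rpow (b := b) (σ := σ) K c p 0 hx

end Generator

section CharacteristicRoot

variable {r b σ m : ℝ}

theorem char_eq_zero_of_eq_root (hr : 0 ≤ r) (hσ : σ ≠ 0)
    (hm : m = 1/2 - b/σ^2 + √((1/2 - b/σ^2)^2 + 2*r/σ^2)) :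
    (1/2) * σ^2 * m * (m - 1) + b * m - r = 0 := by
  set c := 1/2 - b/σ^2 with hc
  set s := √(c^2 + 2*r/σ^2)
  have hb : b = σ^2 * (1/2 - c) := by rw [hc]; field_simp; ring
  have hr' : r = σ^2/2 * (s^2 - c^2) := by
    rw [Real.sq_sqrt (by positivity)]; field_simp; ring
  rw [hm]
  linear_combination (c + s) * hb - hr'

theorem lt_root_of_char_neg (hσ : σ ≠ 0)
    (hm : m = 1/2 - b/σ^2 + √((1/2 - b/σ^2)^2 + 2*r/σ^2))
    {p : ℝ} (hp : (1/2) * σ^2 * p * (p - 1) + b * p - r < 0) : p < m := by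
  have hσ2 : 0 < σ^2 := by positivity
  have hsq : (p - (1/2 - b/σ^2))^2 < (1/2 - b/σ^2)^2 + 2*r/σ^2 := by
    have : (p - (1/2 - b/σ^2))^2 - ((1/2 - b/σ^2)^2 + 2*r/σ^2)
        = 2/σ^2 * ((1/2) * σ^2 * p * (p - 1) + b * p - r) := by
      field_simp; ring
    have : 2/σ^2 * ((1/2) * σ^2 * p * (p - 1) + b * p - r) < 0 :=
      mul_neg_of_pos_of_neg (by positivity) hp
    linarith
  linarith [Real.lt_sqrt_of_sq_lt hsq]

end CharacteristicRoot

section SwitchingGain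

variable {γ m x xs : ℝ}

theorem rpow_sub_mul_rpow_le (hγ : 0 < γ) (hγm : γ ≤ m) (hx : 0 < x) (hxs : 0 < xs) :
    x ^ γ - γ / m * xs ^ (γ - m) * x ^ m ≤ (1 - γ / m) * xs ^ γ := by
  have hm : 0 < m := hγ.trans_le hγm
  set t := x / xs
  have ht : 0 < t := div_pos hx hxs
  have hbern : t ^ γ ≤ 1 + γ / m * (t ^ m - 1) := by
    have h := rpow_one_add_le_one_add_mul_self (s := t ^ m - 1)
      (by linarith [Real.rpow_nonneg ht.le m]) (p := γ / m) (by positivity)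
      ((div_le_one hm).2 hγm)
    rwa [add_sub_cancel, ← Real.rpow_mul ht.le, mul_div_cancel₀ _ hm.ne'] at h
  have hx_eq : x = xs * t := by simp only [t]; field_simp
  have hxs_cancel : xs ^ (γ - m) * xs ^ m = xs ^ γ := by
    rw [← Real.rpow_add hxs, sub_add_cancel]
  calc x ^ γ - γ / m * xs ^ (γ - m) * x ^ m
      = xs ^ γ * (t ^ γ - γ / m * t ^ m) := by
        rw [hx_eq, Real.mul_rpow hxs.le ht.le, Real.mul_rpow hxs.le ht.le, ← hxs_cancel]
        ring
    _ ≤ xs ^ γ * (1 - γ / m) :=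
        mul_le_mul_of_nonneg_left (by linarith) (by positivity)
    _ = (1 - γ / m) * xs ^ γ := mul_comm _ _

theorem rpow_sub_mul_rpow_nonneg (hγ : 0 < γ) (hγm : γ ≤ m) (hx : 0 < x) (hxxs : x ≤ xs) :
    0 ≤ x ^ γ - γ / m * xs ^ (γ - m) * x ^ m := by
  have hm : 0 < m := hγ.trans_le hγm
  have hxs : 0 < xs := hx.trans_le hxxs
  have hcoef : γ / m ≤ 1 := (div_le_one hm).2 hγm
  have hpow : xs ^ (γ - m) ≤ x ^ (γ - m) := Real.rpow_le_rpow_of_nonpos hx hxxs (by linarith)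
  rw [sub_nonneg]
  calc γ / m * xs ^ (γ - m) * x ^ m
      ≤ 1 * x ^ (γ - m) * x ^ m := by gcongr
    _ = x ^ γ := by rw [one_mul, ← Real.rpow_add hx, sub_add_cancel]

end SwitchingGain

theorem mul_one_sub_div_le_of_char_eq_zero {r b σ γ m : ℝ}
    (hroot : (1/2) * σ^2 * m * (m - 1) + b * m - r = 0) (hγ : 0 ≤ γ) (hγm : γ < m) :
    r * (1 - γ / m) ≤ r - b * γ + (1/2) * σ^2 * γ * (1 - γ) := by
  have hm : 0 < m := hγ.trans_lt hγm
  obtain rfl : r = (1/2) * σ^2 * m * (m - 1) + b * m := by linarith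
  have hdiff : (1/2) * σ^2 * m * (m - 1) + b * m - b * γ + (1/2) * σ^2 * γ * (1 - γ)
      - ((1/2) * σ^2 * m * (m - 1) + b * m) * (1 - γ / m) = γ * ((1/2) * σ^2 * (m - γ)) := by
    field_simp
    ring
  have : 0 ≤ γ * ((1/2) * σ^2 * (m - γ)) := by
    have := sub_nonneg.2 hγm.le
    positivity
  linarith

theorem residual_mul_rpow_eq_zero {r b σ γ K x : ℝ}
    (hK : K * (r - b * γ + (1/2) * σ^2 * γ * (1 - γ)) = 1) (hx : 0 < x) :
    r * (K * x ^ γ) - Lop b σ (fun y => K * y ^ γ) x - x ^ γ = 0 := by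
  rw [Lop_mul_rpow K γ hx]
  linear_combination x ^ γ * hK

theorem max_min_eq_zero {a c d : ℝ} (hc : 0 < c) (h : a = 0 ∧ d ≤ 0 ∨ a ≤ 0 ∧ d = 0) :
    max (min a c) d = 0 := by
  rcases h with ⟨rfl, hd⟩ | ⟨ha, rfl⟩
  · rw [min_eq_left hc.le, max_eq_left hd]
  · exact max_eq_right ((min_le_left _ _).trans ha)

section Symmetric

variable {r γ c12 c21 χ12 χ21 b1 σ1 b2 σ2 K₁ K₂ A m xs x : ℝ}

theorem solvesQVI_of_pair {v1 v2 : ℝ → ℝ} (hc12 : 0 < c12) (hc21 : 0 < c21)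
    (h1 : r * v1 x - Lop b1 σ1 v1 x - x ^ γ = 0 ∧ v1 x ≤ v2 x + χ12 ∨
      r * v1 x - Lop b1 σ1 v1 x - x ^ γ ≤ 0 ∧ v1 x = v2 x + χ12)
    (h2 : r * v2 x - Lop b2 σ2 v2 x - x ^ γ = 0) (hgap : v2 x ≤ v1 x + χ21) :
    solvesQVI r γ c12 c21 χ12 χ21 b1 σ1 b2 σ2 b1 σ1 b2 σ2 v1 v2 v1 v2 x := by
  have row1 : ∀ c, 0 < c → max (min (r * v1 x - Lop b1 σ1 v1 x - x ^ γ) (v1 x - (v1 x - c)))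
      (v1 x - (v2 x + χ12)) = 0 := fun c hc => by
    rw [sub_sub_cancel]
    rcases h1 with ⟨ha, hv⟩ | ⟨ha, hv⟩
    exacts [max_min_eq_zero hc (.inl ⟨ha, by linarith⟩),
      max_min_eq_zero hc (.inr ⟨ha, by linarith⟩)]
  have row2 : ∀ c, 0 < c → max (min (r * v2 x - Lop b2 σ2 v2 x - x ^ γ) (v2 x - (v2 x - c)))
      (v2 x - (v1 x + χ21)) = 0 := fun c hc => by
    rw [sub_sub_cancel]
    exact max_min_eq_zero hc (.inl ⟨h2, by linarith⟩)
  exact ⟨row1 c12 hc12, row2 c12 hc12, row1 c21 hc21, row2 c21 hc21⟩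

theorem solvesQVI_of_lt_threshold (hc12 : 0 < c12) (hc21 : 0 < c21) (hχ21 : 0 < χ21)
    (hK₁ : K₁ * (r - b1 * γ + (1/2) * σ1^2 * γ * (1 - γ)) = 1)
    (hK₂ : K₂ * (r - b2 * γ + (1/2) * σ2^2 * γ * (1 - γ)) = 1)
    (hroot : (1/2) * σ1^2 * m * (m - 1) + b1 * m - r = 0)
    (hγ : 0 < γ) (hγm : γ < m) (hK : K₂ < K₁)
    (hfit : (1 - γ / m) * ((K₁ - K₂) * xs ^ γ) = χ12)
    (hA : A = -(K₁ - K₂) * (γ / m) * xs ^ (γ - m)) (hx : 0 < x) (hlt : x < xs) :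
    solvesQVI r γ c12 c21 χ12 χ21 b1 σ1 b2 σ2 b1 σ1 b2 σ2
      (fun y => if y < xs then K₁ * y ^ γ + A * y ^ m else K₂ * y ^ γ + χ12)
      (fun y => K₂ * y ^ γ)
      (fun y => if y < xs then K₁ * y ^ γ + A * y ^ m else K₂ * y ^ γ + χ12)
      (fun y => K₂ * y ^ γ) x := by
  have hev : (fun y => if y < xs then K₁ * y ^ γ + A * y ^ m else K₂ * y ^ γ + χ12)
      =ᶠ[𝓝 x] fun y => K₁ * y ^ γ + A * y ^ m := by
    filter_upwards [Iio_mem_nhds hlt] with y hy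
    exact if_pos hy
  have hgain : K₁ * x ^ γ + A * x ^ m - K₂ * x ^ γ
      = (K₁ - K₂) * (x ^ γ - γ / m * xs ^ (γ - m) * x ^ m) := by
    rw [hA]; ring
  have hgain_le := mul_le_mul_of_nonneg_left
    (rpow_sub_mul_rpow_le hγ hγm.le hx (hx.trans hlt)) (sub_nonneg.2 hK.le)
  have hgain_nonneg := mul_nonneg (sub_nonneg.2 hK.le)
    (rpow_sub_mul_rpow_nonneg (m := m) hγ hγm.le hx hlt.le)
  refine solvesQVI_of_pair hc12 hc21 (.inl ⟨?_, ?_⟩) (residual_mul_rpow_eq_zero hK₂ hx) ?_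
  · rw [Lop_congr_of_eventuallyEq hev, Lop_mul_rpow_add_mul_rpow K₁ A γ m hx, if_pos hlt]
    linear_combination x ^ γ * hK₁ - A * x ^ m * hroot
  · simp only [if_pos hlt]
    linarith
  · simp only [if_pos hlt]
    linarith

theorem solvesQVI_of_threshold_lt (hc12 : 0 < c12) (hc21 : 0 < c21)
    (hχ12 : 0 < χ12) (hχ21 : 0 < χ21)
    (hd : 0 < r - b1 * γ + (1/2) * σ1^2 * γ * (1 - γ))
    (hK₁ : K₁ * (r - b1 * γ + (1/2) * σ1^2 * γ * (1 - γ)) = 1)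
    (hK₂ : K₂ * (r - b2 * γ + (1/2) * σ2^2 * γ * (1 - γ)) = 1)
    (hroot : (1/2) * σ1^2 * m * (m - 1) + b1 * m - r = 0)
    (hγ : 0 < γ) (hγm : γ < m) (hK : K₂ < K₁)
    (hfit : (1 - γ / m) * ((K₁ - K₂) * xs ^ γ) = χ12) (hxs : 0 < xs) (hgt : xs < x) :
    solvesQVI r γ c12 c21 χ12 χ21 b1 σ1 b2 σ2 b1 σ1 b2 σ2
      (fun y => if y < xs then K₁ * y ^ γ + A * y ^ m else K₂ * y ^ γ + χ12)
      (fun y => K₂ * y ^ γ)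
      (fun y => if y < xs then K₁ * y ^ γ + A * y ^ m else K₂ * y ^ γ + χ12)
      (fun y => K₂ * y ^ γ) x := by
  have hx : 0 < x := hxs.trans hgt
  have hev : (fun y => if y < xs then K₁ * y ^ γ + A * y ^ m else K₂ * y ^ γ + χ12)
      =ᶠ[𝓝 x] fun y => K₂ * y ^ γ + χ12 := by
    filter_upwards [Ioi_mem_nhds hgt] with y hy
    exact if_neg (not_lt.2 hy.le)
  have hnlt : ¬ x < xs := not_lt.2 hgt.le
  set d := r - b1 * γ + (1/2) * σ1^2 * γ * (1 - γ)
  have hK₁₂ : 0 ≤ K₁ - K₂ := sub_nonneg.2 hK.le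
  -- the regime-1 residual of `v2 + χ12` is `r χ12 - (K₁ - K₂) d x ^ γ`
  have hresidual : r * χ12 ≤ (K₁ - K₂) * d * x ^ γ :=
    calc r * χ12 = r * (1 - γ / m) * ((K₁ - K₂) * xs ^ γ) := by rw [← hfit]; ring
      _ ≤ d * ((K₁ - K₂) * xs ^ γ) := by
        gcongr
        exact mul_one_sub_div_le_of_char_eq_zero hroot hγ.le hγm
      _ ≤ d * ((K₁ - K₂) * x ^ γ) := by gcongr
      _ = (K₁ - K₂) * d * x ^ γ := by ring
  refine solvesQVI_of_pair hc12 hc21 (.inr ⟨?_, ?_⟩) (residual_mul_rpow_eq_zero hK₂ hx) ?_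
  · rw [Lop_congr_of_eventuallyEq hev, Lop_mul_rpow_add_const K₂ χ12 γ hx, if_neg hnlt]
    linear_combination hresidual + x ^ γ * hK₁
  · simp only [if_neg hnlt]
  · simp only [if_neg hnlt]
    linarith

end Symmetric

theorem thm4_5_B1_general
    (r γ c12 c21 χ12 χ21 : ℝ)
    (b11 σ11 b12 σ12 b21 σ21 b22 σ22 : ℝ)
    (K11 K12 : ℝ)
    (hr : 0 < r) (hγ0 : 0 < γ)
    (hσ11 : 0 < σ11)
    (hd11 : 0 < r - b11*γ + (1/2)*σ11^2*γ*(1-γ))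
    (hd12 : 0 < r - b12*γ + (1/2)*σ12^2*γ*(1-γ))
    (hK11 : K11 = 1/(r - b11*γ + (1/2)*σ11^2*γ*(1-γ)))
    (hK12 : K12 = 1/(r - b12*γ + (1/2)*σ12^2*γ*(1-γ)))
    (heqb21 : b21 = b11) (heqσ21 : σ21 = σ11)
    (heqb22 : b22 = b12) (heqσ22 : σ22 = σ12)
    (K₁ K₂ : ℝ) (hK₁ : K₁ = K11) (hK₂ : K₂ = K12)
    (hKgt : K₂ < K₁)
    (m : ℝ) (hm : m = 1/2 - b11/σ11^2 + Real.sqrt ((1/2 - b11/σ11^2)^2 + 2*r/σ11^2))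
    (xs A : ℝ)
    (hxs : xs = (m * χ12 / ((m - γ) * (K₁ - K₂))) ^ (1/γ))
    (hA : A = -(K₁ - K₂) * (γ / m) * xs ^ (γ - m))
    (hc12 : 0 < c12) (hc21 : 0 < c21) (hχ12 : 0 < χ12) (hχ21 : 0 < χ21)
    :
    ∀ x : ℝ, 0 < x → x ≠ xs →
      solvesQVI r γ c12 c21 χ12 χ21 b11 σ11 b12 σ12 b21 σ21 b22 σ22
        (fun y => if y < xs then K₁ * y ^ γ + A * y ^ m else K₂ * y ^ γ + χ12)
        (fun y => K₂ * y ^ γ)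
        (fun y => if y < xs then K₁ * y ^ γ + A * y ^ m else K₂ * y ^ γ + χ12)
        (fun y => K₂ * y ^ γ) x := by
  intro x hx hne
  subst b21 σ21 b22 σ22
  have hK₁d : K₁ * (r - b11*γ + (1/2)*σ11^2*γ*(1-γ)) = 1 := by
    rw [hK₁, hK11, one_div_mul_cancel hd11.ne']
  have hK₂d : K₂ * (r - b12*γ + (1/2)*σ12^2*γ*(1-γ)) = 1 := by
    rw [hK₂, hK12, one_div_mul_cancel hd12.ne']
  have hroot := char_eq_zero_of_eq_root hr.le hσ11.ne' hm
  have hγm : γ < m := lt_root_of_char_neg hσ11.ne' hm (by linarith)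
  have hmγ := sub_pos.2 hγm
  have hK₁₂ := sub_pos.2 hKgt
  have hm0 := hγ0.trans hγm
  have hB : 0 < m * χ12 / ((m - γ) * (K₁ - K₂)) := by positivity
  have hxs0 : 0 < xs := hxs ▸ Real.rpow_pos_of_pos hB _
  have hfit : (1 - γ / m) * ((K₁ - K₂) * xs ^ γ) = χ12 := by
    rw [hxs, ← Real.rpow_mul hB.le, one_div_mul_cancel hγ0.ne', Real.rpow_one]
    field_simp [hmγ.ne', hK₁₂.ne', hm0.ne']
  rcases hne.lt_or_gt with hlt | hgt
  · exact solvesQVI_of_lt_threshold hc12 hc21 hχ21 hK₁d hK₂d hroot hγ0 hγm hKgt hfit hA hx hlt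
  · exact solvesQVI_of_threshold_lt hc12 hc21 hχ12 hχ21 hd11 hK₁d hK₂d hroot hγ0 hγm hKgt hfit
      hxs0 hgt

theorem thm4_5_B1
    (r γ c12 c21 χ12 χ21 : ℝ)
    (b11 σ11 b12 σ12 b21 σ21 b22 σ22 : ℝ)
    (K11 K12 K21 K22 : ℝ)
    (hr : 0 < r) (hγ0 : 0 < γ) (hγ1 : γ < 1)
    (hσ11 : 0 < σ11) (hσ12 : 0 < σ12) (hσ21 : 0 < σ21) (hσ22 : 0 < σ22)
    (hd11 : 0 < r - b11*γ + (1/2)*σ11^2*γ*(1-γ))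
    (hd12 : 0 < r - b12*γ + (1/2)*σ12^2*γ*(1-γ))
    (hd21 : 0 < r - b21*γ + (1/2)*σ21^2*γ*(1-γ))
    (hd22 : 0 < r - b22*γ + (1/2)*σ22^2*γ*(1-γ))
    (hrb11 : b11 < r) (hrb12 : b12 < r) (hrb21 : b21 < r) (hrb22 : b22 < r)
    (hK11 : K11 = 1/(r - b11*γ + (1/2)*σ11^2*γ*(1-γ)))
    (hK12 : K12 = 1/(r - b12*γ + (1/2)*σ12^2*γ*(1-γ)))
    (hK21 : K21 = 1/(r - b21*γ + (1/2)*σ21^2*γ*(1-γ)))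
    (hK22 : K22 = 1/(r - b22*γ + (1/2)*σ22^2*γ*(1-γ)))
    (heqb21 : b21 = b11) (heqσ21 : σ21 = σ11)
    (heqb22 : b22 = b12) (heqσ22 : σ22 = σ12)
    (K₁ K₂ : ℝ) (hK₁ : K₁ = K11) (hK₂ : K₂ = K12)
    (hKgt : K₂ < K₁)
    (m : ℝ) (hm : m = 1/2 - b11/σ11^2 + Real.sqrt ((1/2 - b11/σ11^2)^2 + 2*r/σ11^2))
    (xs A : ℝ)
    (hxs : xs = (m * χ12 / ((m - γ) * (K₁ - K₂))) ^ (1/γ))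
    (hA : A = -(K₁ - K₂) * (γ / m) * xs ^ (γ - m))
    (hc12 : 0 < c12) (hc21 : 0 < c21) (hχ12 : 0 < χ12) (hχ21 : 0 < χ21)
    :
    ∀ x : ℝ, 0 < x → x ≠ xs →
      solvesQVI r γ c12 c21 χ12 χ21 b11 σ11 b12 σ12 b21 σ21 b22 σ22
        (fun y => if y < xs then K₁ * y ^ γ + A * y ^ m else K₂ * y ^ γ + χ12)
        (fun y => K₂ * y ^ γ)
        (fun y => if y < xs then K₁ * y ^ γ + A * y ^ m else K₂ * y ^ γ + χ12)
        (fun y => K₂ * y ^ γ) x :=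
  thm4_5_B1_general r γ c12 c21 χ12 χ21 b11 σ11 b12 σ12 b21 σ21 b22 σ22 K11 K12 hr hγ0 hσ11 hd11
    hd12 hK11 hK12 heqb21 heqσ21 heqb22 heqσ22 K₁ K₂ hK₁ hK₂ hKgt m hm xs A hxs hA hc12 hc21 hχ12
    hχ21
end
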